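/- Let C be an additive category and let U' be the full subcategory of the morphism category Mor(C) consisting of objects of the form (X --1--> X) ⊕ (0 --> Y). Then the quotient category Mor(C)/[U'] is equivalent to (mod-C^op)^op, via sending an object f : X --> Y of Mor(C) to the cokernel of C(f,-) : C(Y,-) --> C(X,-). -/

import Mathlib

open CategoryTheory CategoryTheory.Limits Opposite ZeroObject CategoryTheory.Pretriangulated

universe w v u

namespace Paper

section IdealQuotient

variable (C : Type u) [Category.{v} C] [Preadditive C]

/-- The additive subgroup of morphisms `X ⟶ Y` generated by the morphisms factoring through
an object satisfying `P`; this is the ideal `[D]` associated to the full subcategory `D`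
of objects satisfying `P`. -/
def idealOf (P : C → Prop) (X Y : C) : AddSubgroup (X ⟶ Y) :=
  AddSubgroup.closure
    {f : X ⟶ Y | ∃ (Z : C), P Z ∧ ∃ (u : X ⟶ Z) (v : Z ⟶ Y), f = u ≫ v}

variable {C}

lemma idealOf_comp_left (P : C → Prop) {X Y Z : C} (h : X ⟶ Y) {x : Y ⟶ Z}
    (hx : x ∈ idealOf C P Y Z) : h ≫ x ∈ idealOf C P X Z := by
  have hle : idealOf C P Y Z ≤
      AddSubgroup.comap (Preadditive.leftComp Z h) (idealOf C P X Z) := by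
    rw [idealOf, AddSubgroup.closure_le]
    rintro g ⟨W, hW, u, v, rfl⟩
    exact AddSubgroup.subset_closure ⟨W, hW, h ≫ u, v, by simp [Preadditive.leftComp]⟩
  exact hle hx

lemma idealOf_comp_right (P : C → Prop) {X Y Z : C} {x : X ⟶ Y} (h : Y ⟶ Z)
    (hx : x ∈ idealOf C P X Y) : x ≫ h ∈ idealOf C P X Z := by
  have hle : idealOf C P X Y ≤
      AddSubgroup.comap (Preadditive.rightComp X h) (idealOf C P X Z) := by
    rw [idealOf, AddSubgroup.closure_le]
    rintro g ⟨W, hW, u, v, rfl⟩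
    exact AddSubgroup.subset_closure ⟨W, hW, u, v ≫ h, by simp [Preadditive.rightComp]⟩
  exact hle hx

variable (C)

/-- The hom relation on `C` identifying two morphisms whose difference lies in the
ideal of morphisms factoring through an object satisfying `P`. -/
def idealRel (P : C → Prop) : HomRel C := fun {X Y} f g => f - g ∈ idealOf C P X Y

instance idealRel_congruence (P : C → Prop) : Congruence (idealRel C P) where
  equivalence :=
    { refl := fun f => by simpa [idealRel] using (idealOf C P _ _).zero_mem
      symm := fun {f g} h => by
        simpa [idealRel, neg_sub] using (idealOf C P _ _).neg_mem h
      trans := fun {f g h} h₁ h₂ => by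
        simpa [idealRel, sub_add_sub_cancel] using (idealOf C P _ _).add_mem h₁ h₂ }
  comp_left := by
    intro X Y Z f g g' h
    simpa [idealRel, Preadditive.comp_sub] using idealOf_comp_left P f h
  comp_right := by
    intro X Y Z f f' g h
    simpa [idealRel, Preadditive.sub_comp] using idealOf_comp_right P g h

lemma idealRel_add (P : C → Prop) ⦃X Y : C⦄ (f₁ f₂ g₁ g₂ : X ⟶ Y)
    (h₁ : idealRel C P f₁ f₂) (h₂ : idealRel C P g₁ g₂) :
    idealRel C P (f₁ + g₁) (f₂ + g₂) := by
  simpa [idealRel, add_sub_add_comm] using (idealOf C P X Y).add_mem h₁ h₂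

/-- The quotient of `C` by the ideal of morphisms factoring through an object
satisfying `P`; e.g. the stable category `C/[𝒫]`. -/
abbrev IdealQuot (P : C → Prop) := CategoryTheory.Quotient (idealRel C P)

instance (P : C → Prop) : Preadditive (IdealQuot C P) :=
  Quotient.preadditive _ (idealRel_add C P)

instance (P : C → Prop) : (Quotient.functor (idealRel C P)).Additive :=
  Quotient.functor_additive _ (idealRel_add C P)

end IdealQuotient

section FP

variable (C : Type u) [Category.{v} C] [Preadditive C]

/-- A contravariant additive-group-valued functor is finitely presented if it is a cokernel
of a morphism between representable functors. -/
def IsFP (F : Cᵒᵖ ⥤ AddCommGrpCat.{v}) : Prop :=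
  ∃ (X Y : C) (f : X ⟶ Y), Nonempty (F ≅ cokernel (preadditiveYoneda.map f))

/-- The category `mod-C` of finitely presented contravariant functors. -/
abbrev ModCat := ObjectProperty.FullSubcategory (IsFP C)

/-- A covariant functor is finitely presented if it is a cokernel of a morphism
between corepresentable functors. -/
def IsFPCo (F : C ⥤ AddCommGrpCat.{v}) : Prop :=
  ∃ (X Y : C) (f : X ⟶ Y), Nonempty (F ≅ cokernel (preadditiveCoyoneda.map f.op))

/-- The category `mod-Cᵒᵖ` of finitely presented covariant functors. -/
abbrev CoModCat := ObjectProperty.FullSubcategory (IsFPCo C)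

end FP

section ArrowPreadditive

variable {C : Type u} [Category.{v} C] [Preadditive C]

namespace ArrowHom

variable {A B : Arrow C}

instance : Zero (A ⟶ B) := ⟨{ left := 0, right := 0, w := by simp }⟩
instance : Add (A ⟶ B) :=
  ⟨fun f g => { left := f.left + g.left, right := f.right + g.right,
                w := by simp [Preadditive.add_comp, Preadditive.comp_add] }⟩
instance : Neg (A ⟶ B) :=
  ⟨fun f => { left := -f.left, right := -f.right, w := by simp }⟩
instance : Sub (A ⟶ B) :=
  ⟨fun f g => { left := f.left - g.left, right := f.right - g.right,
                w := by simp [Preadditive.sub_comp, Preadditive.comp_sub] }⟩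
instance : SMul ℕ (A ⟶ B) :=
  ⟨fun n f => { left := n • f.left, right := n • f.right, w := by simp }⟩
instance : SMul ℤ (A ⟶ B) :=
  ⟨fun n f => { left := n • f.left, right := n • f.right, w := by simp }⟩

@[simp] lemma zero_left : (0 : A ⟶ B).left = 0 := rfl
@[simp] lemma zero_right : (0 : A ⟶ B).right = 0 := rfl
@[simp] lemma add_left (f g : A ⟶ B) : (f + g).left = f.left + g.left := rfl
@[simp] lemma add_right (f g : A ⟶ B) : (f + g).right = f.right + g.right := rfl
@[simp] lemma neg_left (f : A ⟶ B) : (-f).left = -f.left := rfl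
@[simp] lemma neg_right (f : A ⟶ B) : (-f).right = -f.right := rfl

def toPair (f : A ⟶ B) : (A.left ⟶ B.left) × (A.right ⟶ B.right) := (f.left, f.right)

lemma toPair_injective : Function.Injective (toPair (A := A) (B := B)) := by
  rintro ⟨⟩ ⟨⟩ h
  injection h with h₁ h₂
  exact CommaMorphism.ext h₁ h₂

instance : AddCommGroup (A ⟶ B) :=
  toPair_injective.addCommGroup toPair rfl (fun _ _ => rfl) (fun _ => rfl) (fun _ _ => rfl)
    (fun _ _ => rfl) (fun _ _ => rfl)

end ArrowHom

instance : Preadditive (Arrow C) where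
  homGroup A B := inferInstance
  add_comp := by
    intros; apply CommaMorphism.ext <;> simp [Preadditive.add_comp]
  comp_add := by
    intros; apply CommaMorphism.ext <;> simp [Preadditive.comp_add]

end ArrowPreadditive


/-- objects of `Mor(C)` of the form `(X —1→ X) ⊕ (0 → Y)` -/
def IsU'Obj (C : Type u) [Category.{v} C] [Preadditive C] [HasZeroObject C]
    [HasBinaryBiproducts C] (a : Arrow C) : Prop :=
  ∃ (X Y : C), Nonempty (a ≅ Arrow.mk (biprod.map (𝟙 X) (0 : (0 : C) ⟶ Y)))

/-!
The functor `a ↦ Coker C(a, -)` from `Mor(C)` to `(mod-Cᵒᵖ)ᵒᵖ` is essentially surjective by the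
definition of finite presentation, and full by the Yoneda lemma: a natural map between two such
cokernels is determined by the image of an identity, which lifts along the epimorphism from a
representable. Its kernel is exactly `[U']`. The objects of `U'` are split monomorphisms, whose
cokernel functors vanish. Conversely, if `φ : a ⟶ b` is killed then `φ.left = a.hom ≫ k` for some
`k`, and `φ` factors through the object `b.left ⊞ 0 ⟶ b.left ⊞ b.right` of `U'`.
-/

section Coyoneda

variable {C : Type u} [Category.{v} C]

lemma exists_app_eq_of_cokernel_π_app_eq_zero {F G : C ⥤ AddCommGrpCat.{v}} (η : F ⟶ G)
    {T : C} (x : G.obj T) (hx : (cokernel.π η).app T x = 0) : ∃ y, η.app T y = x := by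
  have hS : (ShortComplex.mk η (cokernel.π η) (cokernel.condition η)).Exact :=
    ShortComplex.exact_of_g_is_cokernel _ (cokernelIsCokernel η)
  exact (ShortComplex.ab_exact_iff _).1 (hS.map ((evaluation C AddCommGrpCat.{v}).obj T)) x hx

variable [Preadditive C]

lemma preadditiveCoyoneda_hom_ext {X : C} {F : C ⥤ AddCommGrpCat.{v}}
    {α β : preadditiveCoyoneda.obj (op X) ⟶ F} (h : α.app X (𝟙 X) = β.app X (𝟙 X)) :
    α = β := by
  have hyoneda (γ : preadditiveCoyoneda.obj (op X) ⟶ F) {T : C} (g : X ⟶ T) :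
      γ.app T g = F.map g (γ.app X (𝟙 X)) := by
    have hg : (preadditiveCoyoneda.obj (op X)).map g (𝟙 X) = g := Category.id_comp g
    have hγ := NatTrans.naturality_apply γ g (𝟙 X)
    rwa [hg] at hγ
  ext T g
  exact (hyoneda α g).trans ((congrArg (F.map g) h).trans (hyoneda β g).symm)

lemma preadditiveCoyoneda_map_add {X Y : Cᵒᵖ} (f g : X ⟶ Y) :
    preadditiveCoyoneda.map (f + g) = preadditiveCoyoneda.map f + preadditiveCoyoneda.map g := by
  ext T (h : unop X ⟶ T)
  exact Preadditive.add_comp _ _ _ f.unop g.unop h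

end Coyoneda

section CokerCoyoneda

variable {C : Type u} [Category.{v} C] [Preadditive C]

noncomputable abbrev cokerCoyoneda (a : Arrow C) : C ⥤ AddCommGrpCat.{v} :=
  cokernel (preadditiveCoyoneda.map a.hom.op)

noncomputable abbrev cokerCoyonedaπ (a : Arrow C) :
    preadditiveCoyoneda.obj (op a.left) ⟶ cokerCoyoneda a :=
  cokernel.π (preadditiveCoyoneda.map a.hom.op)

lemma exists_hom_comp_eq_of_coyoneda_comp_π_eq_zero {a : Arrow C} {T : C} (u : a.left ⟶ T)
    (h : preadditiveCoyoneda.map u.op ≫ cokerCoyonedaπ a = 0) :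
    ∃ k : a.right ⟶ T, a.hom ≫ k = u := by
  have hu : (cokerCoyonedaπ a).app T (u ≫ 𝟙 T) = 0 :=
    ConcreteCategory.congr_hom (NatTrans.congr_app h T) (𝟙 T)
  rw [Category.comp_id] at hu
  exact exists_app_eq_of_cokernel_π_app_eq_zero (preadditiveCoyoneda.map a.hom.op) u hu

noncomputable def cokerCoyonedaMap {a b : Arrow C} (φ : a ⟶ b) :
    cokerCoyoneda b ⟶ cokerCoyoneda a :=
  cokernel.map _ _ (preadditiveCoyoneda.map φ.right.op) (preadditiveCoyoneda.map φ.left.op) (by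
    simp only [← Functor.map_comp, ← op_comp, Arrow.w])

@[simp]
lemma π_cokerCoyonedaMap {a b : Arrow C} (φ : a ⟶ b) :
    cokerCoyonedaπ b ≫ cokerCoyonedaMap φ =
      preadditiveCoyoneda.map φ.left.op ≫ cokerCoyonedaπ a := by
  simp [cokerCoyonedaMap]

lemma cokerCoyonedaMap_id (a : Arrow C) : cokerCoyonedaMap (𝟙 a) = 𝟙 (cokerCoyoneda a) :=
  coequalizer.hom_ext (by simp)

lemma cokerCoyonedaMap_comp {a b c : Arrow C} (φ : a ⟶ b) (ψ : b ⟶ c) :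
    cokerCoyonedaMap (φ ≫ ψ) = cokerCoyonedaMap ψ ≫ cokerCoyonedaMap φ :=
  coequalizer.hom_ext (by simp [reassoc_of% (π_cokerCoyonedaMap ψ)])

noncomputable def cokerCoyonedaMapAddHom (a b : Arrow C) :
    (a ⟶ b) →+ (cokerCoyoneda b ⟶ cokerCoyoneda a) :=
  AddMonoidHom.mk' cokerCoyonedaMap fun φ ψ =>
    coequalizer.hom_ext (by
      simp [show (φ + ψ).left = φ.left + ψ.left from rfl, preadditiveCoyoneda_map_add,
        Preadditive.add_comp, Preadditive.comp_add])

lemma cokerCoyonedaMap_sub {a b : Arrow C} (φ ψ : a ⟶ b) :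
    cokerCoyonedaMap (φ - ψ) = cokerCoyonedaMap φ - cokerCoyonedaMap ψ :=
  map_sub (cokerCoyonedaMapAddHom a b) φ ψ

lemma isZero_cokerCoyoneda_of_isSplitMono (a : Arrow C) [IsSplitMono a.hom] :
    IsZero (cokerCoyoneda a) :=
  isZero_cokernel_of_epi _

lemma exists_cokerCoyonedaMap_eq {a b : Arrow C} (ψ : cokerCoyoneda b ⟶ cokerCoyoneda a) :
    ∃ φ : a ⟶ b, cokerCoyonedaMap φ = ψ := by
  obtain ⟨u, hu⟩ : ∃ u : a.left ⟶ b.left,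
      (cokerCoyonedaπ a).app b.left u = ψ.app b.left ((cokerCoyonedaπ b).app b.left (𝟙 b.left)) :=
    (AddCommGrpCat.epi_iff_surjective ((cokerCoyonedaπ a).app b.left)).1 inferInstance _
  have hψ : cokerCoyonedaπ b ≫ ψ = preadditiveCoyoneda.map u.op ≫ cokerCoyonedaπ a :=
    preadditiveCoyoneda_hom_ext (by
      change _ = (cokerCoyonedaπ a).app b.left (u ≫ 𝟙 b.left)
      rw [Category.comp_id, hu]
      rfl)
  obtain ⟨v, hv⟩ := exists_hom_comp_eq_of_coyoneda_comp_π_eq_zero (u ≫ b.hom) (by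
    rw [op_comp, Functor.map_comp, Category.assoc, ← hψ, cokernel.condition_assoc, zero_comp])
  exact ⟨Arrow.homMk u v hv.symm, coequalizer.hom_ext (by simp [← hψ])⟩

noncomputable def cokerCoyonedaFP (a : Arrow C) : CoModCat C :=
  ⟨cokerCoyoneda a, a.left, a.right, a.hom, ⟨Iso.refl _⟩⟩

variable (C) in
noncomputable def cokerCoyonedaFunctor : Arrow C ⥤ (CoModCat C)ᵒᵖ where
  obj a := op (cokerCoyonedaFP a)
  map {a b} φ := (ObjectProperty.homMk (cokerCoyonedaMap φ) :
    cokerCoyonedaFP b ⟶ cokerCoyonedaFP a).op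
  map_id a := Quiver.Hom.unop_inj (ObjectProperty.hom_ext _ (cokerCoyonedaMap_id a))
  map_comp φ ψ := Quiver.Hom.unop_inj (ObjectProperty.hom_ext _ (cokerCoyonedaMap_comp φ ψ))

instance : (cokerCoyonedaFunctor C).Full where
  map_surjective ψ := by
    obtain ⟨φ, hφ⟩ := exists_cokerCoyonedaMap_eq ψ.unop.hom
    exact ⟨φ, Quiver.Hom.unop_inj (ObjectProperty.hom_ext _ hφ)⟩

instance : (cokerCoyonedaFunctor C).EssSurj where
  mem_essImage F := by
    obtain ⟨X, Y, f, ⟨e⟩⟩ := F.unop.property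
    exact ⟨Arrow.mk f, ⟨(ObjectProperty.isoMk _ e).op⟩⟩

lemma cokerCoyonedaFunctor_map_eq_iff {a b : Arrow C} (φ ψ : a ⟶ b) :
    (cokerCoyonedaFunctor C).map φ = (cokerCoyonedaFunctor C).map ψ ↔
      cokerCoyonedaMap φ = cokerCoyonedaMap ψ :=
  ⟨fun h => congrArg (fun t => t.unop.hom) h,
    fun h => Quiver.Hom.unop_inj (ObjectProperty.hom_ext _ h)⟩

end CokerCoyoneda

section KernelIdeal

variable {C : Type u} [Category.{v} C] [Preadditive C] [HasZeroObject C] [HasBinaryBiproducts C]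

lemma isSplitMono_hom_of_isU'Obj {a : Arrow C} (ha : IsU'Obj C a) : IsSplitMono a.hom := by
  obtain ⟨X, Y, ⟨e⟩⟩ := ha
  have hretr : biprod.map (𝟙 X) (0 : (0 : C) ⟶ Y) ≫ biprod.fst ≫ biprod.inl = 𝟙 _ :=
    biprod.hom_ext _ _ (by simp) ((isZero_zero C).eq_of_tgt _ _)
  refine IsSplitMono.mk' ⟨e.hom.right ≫ biprod.fst ≫ biprod.inl ≫ e.inv.left, ?_⟩
  simp [← Arrow.w_assoc e.hom, reassoc_of% hretr]

lemma cokerCoyonedaMap_eq_zero_of_mem_idealOf {a b : Arrow C} {φ : a ⟶ b}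
    (hφ : φ ∈ idealOf (Arrow C) (IsU'Obj C) a b) : cokerCoyonedaMap φ = 0 := by
  suffices idealOf (Arrow C) (IsU'Obj C) a b ≤ (cokerCoyonedaMapAddHom a b).ker from this hφ
  rw [idealOf, AddSubgroup.closure_le]
  rintro _ ⟨U, hU, α, β, rfl⟩
  have := isSplitMono_hom_of_isU'Obj hU
  change cokerCoyonedaMap (α ≫ β) = 0
  rw [cokerCoyonedaMap_comp, (isZero_cokerCoyoneda_of_isSplitMono U).eq_zero_of_tgt
    (cokerCoyonedaMap β), zero_comp]

lemma mem_idealOf_of_left_factorization {a b : Arrow C} (φ : a ⟶ b) (k : a.right ⟶ b.left)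
    (hk : a.hom ≫ k = φ.left) : φ ∈ idealOf (Arrow C) (IsU'Obj C) a b := by
  let U := Arrow.mk (biprod.map (𝟙 b.left) (0 : (0 : C) ⟶ b.right))
  let α : a ⟶ U := Arrow.homMk (biprod.lift φ.left 0) (biprod.lift k (φ.right - k ≫ b.hom))
    (by apply biprod.hom_ext <;> simp [U, hk, reassoc_of% hk])
  let β : U ⟶ b := Arrow.homMk biprod.fst (biprod.desc b.hom (𝟙 _))
    (biprod.hom_ext' _ _ (by simp [U]) ((isZero_zero C).eq_of_src _ _))
  refine AddSubgroup.subset_closure ⟨U, ⟨b.left, b.right, ⟨Iso.refl _⟩⟩, α, β, ?_⟩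
  ext <;> simp [α, β]

lemma cokerCoyonedaMap_eq_zero_iff {a b : Arrow C} (φ : a ⟶ b) :
    cokerCoyonedaMap φ = 0 ↔ φ ∈ idealOf (Arrow C) (IsU'Obj C) a b := by
  refine ⟨fun h => ?_, cokerCoyonedaMap_eq_zero_of_mem_idealOf⟩
  obtain ⟨k, hk⟩ := exists_hom_comp_eq_of_coyoneda_comp_π_eq_zero φ.left (by
    rw [← π_cokerCoyonedaMap, h, comp_zero])
  exact mem_idealOf_of_left_factorization φ k hk

lemma idealRel_isU'Obj_eq_homRel :
    idealRel (Arrow C) (IsU'Obj C) = (cokerCoyonedaFunctor C).homRel := by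
  funext a b φ ψ
  refine propext ?_
  rw [Functor.homRel_iff, cokerCoyonedaFunctor_map_eq_iff, ← sub_eq_zero,
    ← cokerCoyonedaMap_sub]
  exact (cokerCoyonedaMap_eq_zero_iff (φ - ψ)).symm

end KernelIdeal

/-- Let `C` be an additive category and `U'` the full subcategory of `Mor(C)`
consisting of objects `(X —1→ X) ⊕ (0 → Y)`. Then `Mor(C)/[U']` is equivalent to
`(mod-Cᵒᵖ)ᵒᵖ`, via `f ↦ Coker C(f, -)`. -/
theorem statement1 (C : Type u) [Category.{v} C] [Preadditive C] [HasZeroObject C]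
    [HasBinaryBiproducts C] :
    ∃ e : IdealQuot (Arrow C) (IsU'Obj C) ≌ (CoModCat C)ᵒᵖ,
      ∀ a : Arrow C,
        Nonempty
          (((e.functor.obj ((Quotient.functor (idealRel (Arrow C) (IsU'Obj C))).obj a)).unop).obj ≅
            cokernel (preadditiveCoyoneda.map a.hom.op)) := by
  unfold IdealQuot
  rw [idealRel_isU'Obj_eq_homRel]
  exact ⟨(CategoryTheory.Quotient.lift (cokerCoyonedaFunctor C).homRel (cokerCoyonedaFunctor C)
    (fun _ _ _ _ h => h)).asEquivalence, fun _ => ⟨Iso.refl _⟩⟩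

end Paper
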